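/- Let H be a Hopf algebra with twist F and let V, W be left H-modules. Then D_F : Hom_K(V,W) → Hom_K(V,W), P ↦ (f̄^α ▶ P) ∘ (f̄_α ▷), is bijective and satisfies D_F(P ∘_⋆ Q) = D_F(P) ∘ D_F(Q) for composable K-linear maps P, Q, where P ∘_⋆ Q := (f̄^α ▶ P) ∘ (f̄_α ▶ Q), and D_F(id_V) = id_V. -/

import Mathlib

/-!
Put `Ψ (a ⊗ b) P = (a ▷) ∘ P ∘ (S b ▷)`. Since `S` is an anti-homomorphism, `Ψ` is multiplicative
on `H ⊗ H`, and `ξ ▶ P = Ψ (Δ ξ) P`. With `u = f^α S(f_α)` and `ū = S(f̄^α) f̄_α`, the cocycle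
condition gives `f̄^α₁ ⊗ S(f̄^α₂) f̄_α = f^α ⊗ S(f_α) ū`, that is `D_F P = Ψ F P ∘ (ū ▷)`, and
it also gives `u ū = ū u = 1`; so `D_F` is a composite of two bijections.

Both `D_F (P ∘_⋆ Q)` and `D_F P ∘ D_F Q` are images of the map
`a ⊗ b ⊗ c ↦ (a ▶ P) ∘ (b ▶ Q) ∘ (c ▷)`, of `(Δ ⊗ id) F⁻¹ · (F⁻¹ ⊗ 1)` and of
`(id ⊗ Δ) F⁻¹ · (1 ⊗ F⁻¹)` respectively, and these agree by the cocycle condition for `F⁻¹`.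
Finally `D_F id = (ε(f̄^α) f̄_α ▷) = id` by the counit condition.
-/

open TensorProduct

noncomputable section

variable (K : Type*) [CommRing K] (H : Type*) [Ring H] [HopfAlgebra K H]

namespace TwistPaper

def ΔH : H →ₗ[K] H ⊗[K] H := Coalgebra.comul
def εH : H →ₗ[K] K := Coalgebra.counit
def SH : H →ₗ[K] H := HopfAlgebra.antipode (R := K)

def ins3 : H ⊗[K] H →ₗ[K] H ⊗[K] (H ⊗[K] H) :=
  LinearMap.lTensor H ((TensorProduct.mk K H H).flip 1)
def ins1 : H ⊗[K] H →ₗ[K] H ⊗[K] (H ⊗[K] H) :=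
  TensorProduct.mk K H (H ⊗[K] H) 1
def comulLeft : H ⊗[K] H →ₗ[K] H ⊗[K] (H ⊗[K] H) :=
  (TensorProduct.assoc K H H H).toLinearMap ∘ₗ (ΔH K H).rTensor H
def comulRight : H ⊗[K] H →ₗ[K] H ⊗[K] (H ⊗[K] H) :=
  (ΔH K H).lTensor H
def counitLeft : H ⊗[K] H →ₗ[K] H :=
  (TensorProduct.lid K H).toLinearMap ∘ₗ (εH K H).rTensor H
def counitRight : H ⊗[K] H →ₗ[K] H :=
  (TensorProduct.rid K H).toLinearMap ∘ₗ (εH K H).lTensor H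

/-- `F` is a twist of the Hopf algebra `H` with inverse `Finv`. -/
structure IsTwist (F Finv : H ⊗[K] H) : Prop where
  mul_inv : F * Finv = 1
  inv_mul : Finv * F = 1
  cocycle : ins3 K H F * comulLeft K H F = ins1 K H F * comulRight K H F
  counit_left : counitLeft K H F = 1
  counit_right : counitRight K H F = 1

/-- `sw x f g c v w = Σ c (f x¹ v) (g x² w)` for `x = Σ x¹ ⊗ x²`. -/
def sw {V W V' W' Z : Type*}
    [AddCommGroup V] [Module K V] [AddCommGroup W] [Module K W]
    [AddCommGroup V'] [Module K V'] [AddCommGroup W'] [Module K W']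
    [AddCommGroup Z] [Module K Z]
    (x : H ⊗[K] H) (f : H →ₗ[K] V →ₗ[K] V') (g : H →ₗ[K] W →ₗ[K] W')
    (c : V' →ₗ[K] W' →ₗ[K] Z) : V →ₗ[K] W →ₗ[K] Z :=
  ((TensorProduct.mapBilinear (σ₁₂ := RingHom.id K) (M := H) (N := H) (M₂ := V') (N₂ := W')).compr₂
      (TensorProduct.lift c ∘ₗ LinearMap.applyₗ (R := K) x)).compl₁₂ f.flip g.flip

/-- `ρ` is a left `H`-module structure. -/
def IsHAction {V : Type*} [AddCommGroup V] [Module K V] (ρ : H →ₗ[K] V →ₗ[K] V) : Prop :=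
  (∀ ξ ζ : H, ∀ v : V, ρ (ξ * ζ) v = ρ ξ (ρ ζ v)) ∧ (∀ v : V, ρ 1 v = v)

/-- `(A, m, ρ)` is a left `H`-module algebra. -/
def IsModuleAlgebra {A : Type*} [AddCommGroup A] [Module K A]
    (m : A →ₗ[K] A →ₗ[K] A) (ρ : H →ₗ[K] A →ₗ[K] A) : Prop :=
  IsHAction K H ρ ∧ ∀ (ξ : H) (a b : A), ρ ξ (m a b) = sw K H (ΔH K H ξ) ρ ρ m a b

/-- `conjEnd f g (η ⊗ ζ) P = f η ∘ₗ P ∘ₗ g ζ` on `Hom_K(V,W)`. -/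
def conjEnd {V W : Type*} [AddCommGroup V] [Module K V] [AddCommGroup W] [Module K W]
    (f : H →ₗ[K] W →ₗ[K] W) (g : H →ₗ[K] V →ₗ[K] V) :
    H ⊗[K] H →ₗ[K] (V →ₗ[K] W) →ₗ[K] (V →ₗ[K] W) :=
  TensorProduct.lift
    ((LinearMap.llcomp K (V →ₗ[K] W) (V →ₗ[K] W) (V →ₗ[K] W) ∘ₗ
        (LinearMap.llcomp K V W W ∘ₗ f)).compl₂
      ((LinearMap.llcomp K V V W).flip ∘ₗ g))

/-- `twistEnd F1 F2 (η ⊗ ζ) = F1 η ∘ₗ F2 ζ` as an operator on `X`. -/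
def twistEnd {X : Type*} [AddCommGroup X] [Module K X]
    (F1 F2 : H →ₗ[K] X →ₗ[K] X) : H ⊗[K] H →ₗ[K] X →ₗ[K] X :=
  TensorProduct.lift ((LinearMap.llcomp K X X X ∘ₗ F1).compl₂ F2)

/-- The `H`-adjoint action `ξ ▶ P = (ξ₁ ▷) ∘ P ∘ (S(ξ₂) ▷)` on `Hom_K(V,W)`. -/
def adjHom {V W : Type*} [AddCommGroup V] [Module K V] [AddCommGroup W] [Module K W]
    (ρW : H →ₗ[K] W →ₗ[K] W) (ρV : H →ₗ[K] V →ₗ[K] V) :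
    H →ₗ[K] (V →ₗ[K] W) →ₗ[K] (V →ₗ[K] W) :=
  conjEnd K H ρW (ρV ∘ₗ SH K H) ∘ₗ ΔH K H

/-- The deformation map `D_F(P) = (f̄^α ▶ P) ∘ (f̄_α ▷)` on `Hom_K(V,W)`. -/
def DFhom {V W : Type*} [AddCommGroup V] [Module K V] [AddCommGroup W] [Module K W]
    (Finv : H ⊗[K] H) (ρW : H →ₗ[K] W →ₗ[K] W) (ρV : H →ₗ[K] V →ₗ[K] V) :
    (V →ₗ[K] W) →ₗ[K] (V →ₗ[K] W) :=
  twistEnd K H ((LinearMap.llcomp K V V W).flip ∘ₗ ρV) (adjHom K H ρW ρV)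
    (TensorProduct.comm K H H Finv)

lemma map_units_inv_eq_one {M N : Type*} [Monoid M] [Monoid N] (φ : M →* N) (u : Mˣ)
    (h : φ u = 1) : φ ↑u⁻¹ = 1 := by
  rw [← Units.coe_map_inv, show Units.map φ u = 1 from Units.ext h, inv_one, Units.val_one]

lemma map_inv_mul_map_inv_of_mul_eq {M N : Type*} [Monoid M] [Monoid N] (φ ψ χ ω : M →* N)
    (u : Mˣ) (h : φ u * ψ u = χ u * ω u) : ψ ↑u⁻¹ * φ ↑u⁻¹ = ω ↑u⁻¹ * χ ↑u⁻¹ := by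
  have hu : Units.map φ u * Units.map ψ u = Units.map χ u * Units.map ω u := Units.ext h
  simpa only [mul_inv_rev, Units.val_mul, Units.coe_map_inv] using congr_arg (fun v => (v⁻¹).val) hu

lemma map_inv_mul_map_of_mul_eq {M N : Type*} [Monoid M] [Monoid N] (φ ψ χ ω : M →* N)
    (u : Mˣ) (h : φ u * ψ u = χ u * ω u) : χ ↑u⁻¹ * φ u = ω u * ψ ↑u⁻¹ := by
  have hu : Units.map φ u * Units.map ψ u = Units.map χ u * Units.map ω u := Units.ext h
  have : (Units.map χ u)⁻¹ * Units.map φ u = Units.map ω u * (Units.map ψ u)⁻¹ := by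
    rw [inv_mul_eq_iff_eq_mul, ← mul_assoc, ← hu, mul_inv_cancel_right]
  simpa only [Units.val_mul, Units.coe_map_inv, Units.coe_map] using congr_arg Units.val this

section Hopf

-- The algebra maps behind the linear maps of `IsTwist`; each is definitionally equal to its
-- linear counterpart, which lets the twist identities be inverted in a group of units.
def ins1AlgHom : H ⊗[K] H →ₐ[K] H ⊗[K] (H ⊗[K] H) := Algebra.TensorProduct.includeRight

def ins3AlgHom : H ⊗[K] H →ₐ[K] H ⊗[K] (H ⊗[K] H) :=
  Algebra.TensorProduct.map (AlgHom.id K H) Algebra.TensorProduct.includeLeft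

def comulLeftAlgHom : H ⊗[K] H →ₐ[K] H ⊗[K] (H ⊗[K] H) :=
  (Algebra.TensorProduct.assoc K K K H H H).toAlgHom.comp
    (Algebra.TensorProduct.map (Bialgebra.comulAlgHom K H) (AlgHom.id K H))

def comulRightAlgHom : H ⊗[K] H →ₐ[K] H ⊗[K] (H ⊗[K] H) :=
  Algebra.TensorProduct.map (AlgHom.id K H) (Bialgebra.comulAlgHom K H)

def counitLeftAlgHom : H ⊗[K] H →ₐ[K] H :=
  (Algebra.TensorProduct.lid K H).toAlgHom.comp
    (Algebra.TensorProduct.map (Bialgebra.counitAlgHom K H) (AlgHom.id K H))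

def counitRightAlgHom : H ⊗[K] H →ₐ[K] H :=
  (Algebra.TensorProduct.rid K K H).toAlgHom.comp
    (Algebra.TensorProduct.map (AlgHom.id K H) (Bialgebra.counitAlgHom K H))

def antipodeMul : H ⊗[K] H →ₗ[K] H := LinearMap.mul' K H ∘ₗ (SH K H).rTensor H

def mulAntipode : H ⊗[K] H →ₗ[K] H := LinearMap.mul' K H ∘ₗ (SH K H).lTensor H

def antipodeRight : H ⊗[K] H →ₗ[K] H ⊗[K] H := (SH K H).lTensor H

/-- `a ⊗ b ↦ a₁ ⊗ S(a₂) b`; conjugation by `dfConj x` is `DFhom x`. -/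
def dfConj : H ⊗[K] H →ₗ[K] H ⊗[K] H := (antipodeMul K H).lTensor H ∘ₗ comulLeft K H

def antipodeMulLeft : H ⊗[K] (H ⊗[K] H) →ₗ[K] H ⊗[K] H :=
  (antipodeMul K H).rTensor H ∘ₗ (TensorProduct.assoc K H H H).symm.toLinearMap

variable {K H}

lemma SH_mul (a b : H) : SH K H (a * b) = SH K H b * SH K H a :=
  HopfAlgebra.antipode_mul_antidistrib a b

lemma SH_one : SH K H 1 = 1 := HopfAlgebra.antipode_one

@[simp] lemma ins1_apply (x : H ⊗[K] H) : ins1 K H x = 1 ⊗ₜ x := rfl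
@[simp] lemma ins3_tmul (a b : H) : ins3 K H (a ⊗ₜ b) = a ⊗ₜ (b ⊗ₜ 1) := rfl
@[simp] lemma comulLeft_tmul (a b : H) :
    comulLeft K H (a ⊗ₜ b) = TensorProduct.assoc K H H H (ΔH K H a ⊗ₜ b) := rfl
@[simp] lemma comulRight_tmul (a b : H) : comulRight K H (a ⊗ₜ b) = a ⊗ₜ ΔH K H b := rfl
@[simp] lemma counitLeft_tmul (a b : H) : counitLeft K H (a ⊗ₜ b) = εH K H a • b := rfl
@[simp] lemma counitRight_tmul (a b : H) : counitRight K H (a ⊗ₜ b) = εH K H b • a := rfl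

@[simp] lemma antipodeMul_tmul (a b : H) : antipodeMul K H (a ⊗ₜ b) = SH K H a * b := rfl
@[simp] lemma mulAntipode_tmul (a b : H) : mulAntipode K H (a ⊗ₜ b) = a * SH K H b := rfl
@[simp] lemma antipodeRight_tmul (a b : H) : antipodeRight K H (a ⊗ₜ b) = a ⊗ₜ SH K H b := rfl
@[simp] lemma antipodeMulLeft_tmul (a b c : H) :
    antipodeMulLeft K H (a ⊗ₜ (b ⊗ₜ c)) = (SH K H a * b) ⊗ₜ c := rfl

lemma antipodeMul_comul (a : H) : antipodeMul K H (ΔH K H a) = εH K H a • 1 := by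
  rw [Algebra.smul_def, mul_one]
  exact HopfAlgebra.mul_antipode_rTensor_comul_apply a

lemma mulAntipode_comul (a : H) : mulAntipode K H (ΔH K H a) = εH K H a • 1 := by
  rw [Algebra.smul_def, mul_one]
  exact HopfAlgebra.mul_antipode_lTensor_comul_apply a

lemma antipodeMul_mul_tmul (z : H ⊗[K] H) (p q : H) :
    antipodeMul K H (z * (p ⊗ₜ q)) = SH K H p * antipodeMul K H z * q := by
  induction z using TensorProduct.induction_on with
  | zero => simp
  | add z z' hz hz' => simp only [add_mul, map_add, hz, hz', mul_add]
  | tmul a b => simp [SH_mul, mul_assoc]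

lemma antipodeMul_comul_mul (b : H) (z : H ⊗[K] H) :
    antipodeMul K H (ΔH K H b * z) = εH K H b • antipodeMul K H z := by
  induction z using TensorProduct.induction_on with
  | zero => simp
  | add z z' hz hz' => simp only [mul_add, map_add, hz, hz', smul_add]
  | tmul p q => simp [antipodeMul_mul_tmul, antipodeMul_comul]

lemma mulAntipode_tmul_one_mul (a : H) (z : H ⊗[K] H) :
    mulAntipode K H ((a ⊗ₜ 1) * z) = a * mulAntipode K H z := by
  induction z using TensorProduct.induction_on with
  | zero => simp
  | add z z' hz hz' => simp only [mul_add, map_add, hz, hz']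
  | tmul b c => simp [mul_assoc]

lemma mul'_mul_one_tmul {A : Type*} [Ring A] [Algebra K A] (z : A ⊗[K] A) (a : A) :
    LinearMap.mul' K A (z * (1 ⊗ₜ a)) = LinearMap.mul' K A z * a := by
  induction z using TensorProduct.induction_on with
  | zero => simp
  | add z z' hz hz' => simp only [add_mul, map_add, hz, hz']
  | tmul b c => simp [mul_assoc]

lemma dfConj_tmul (a b : H) :
    dfConj K H (a ⊗ₜ b) = antipodeRight K H (ΔH K H a) * (1 ⊗ₜ b) := by
  have key : ∀ w : H ⊗[K] H, (antipodeMul K H).lTensor H (TensorProduct.assoc K H H H (w ⊗ₜ b)) =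
      antipodeRight K H w * (1 ⊗ₜ b) := by
    intro w
    induction w using TensorProduct.induction_on with
    | zero => simp
    | add w w' hw hw' => simp only [add_tmul, map_add, add_mul, hw, hw']
    | tmul p q => simp
  exact key _

lemma dfConj_comul (b : H) : dfConj K H (ΔH K H b) = b ⊗ₜ 1 := by
  have h : antipodeMul K H ∘ₗ ΔH K H = Algebra.linearMap K H ∘ₗ εH K H :=
    HopfAlgebra.mul_antipode_rTensor_comul
  calc dfConj K H (ΔH K H b)
      = (antipodeMul K H ∘ₗ ΔH K H).lTensor H (ΔH K H b) := by
        simp [dfConj, comulLeft, ΔH, LinearMap.lTensor_comp_apply]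
    _ = b ⊗ₜ 1 := by
        rw [h, LinearMap.lTensor_comp_apply]
        simp [εH, ΔH]

lemma mul'_dfConj (x : H ⊗[K] H) : LinearMap.mul' K H (dfConj K H x) = counitLeft K H x := by
  induction x using TensorProduct.induction_on with
  | zero => simp
  | add x x' hx hx' => simp only [map_add, hx, hx']
  | tmul a b =>
    rw [dfConj_tmul, mul'_mul_one_tmul, show LinearMap.mul' K H (antipodeRight K H (ΔH K H a)) =
      mulAntipode K H (ΔH K H a) from rfl, mulAntipode_comul, counitLeft_tmul, smul_mul_assoc,
      one_mul]

lemma lTensor_antipodeMul_comulRight_mul (x : H ⊗[K] H) (w : H ⊗[K] (H ⊗[K] H)) :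
    (antipodeMul K H).lTensor H (comulRight K H x * w) =
      (counitRight K H x ⊗ₜ 1) * (antipodeMul K H).lTensor H w := by
  induction x using TensorProduct.induction_on with
  | zero => simp
  | add x x' hx hx' => simp only [map_add, add_mul, add_tmul, hx, hx']
  | tmul a b =>
    induction w using TensorProduct.induction_on with
    | zero => simp
    | add w w' hw hw' => simp only [map_add, mul_add, hw, hw']
    | tmul p z => simp [antipodeMul_comul_mul, smul_tmul]

lemma lTensor_antipodeMul_ins1_mul_ins3 (x y : H ⊗[K] H) :
    (antipodeMul K H).lTensor H (ins1 K H y * ins3 K H x) =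
      antipodeRight K H x * (1 ⊗ₜ antipodeMul K H y) := by
  induction x using TensorProduct.induction_on with
  | zero => simp
  | add x x' hx hx' => simp only [map_add, mul_add, add_mul, hx, hx']
  | tmul a b =>
    induction y using TensorProduct.induction_on with
    | zero => simp
    | add y y' hy hy' => simp only [map_add, add_mul, tmul_add, mul_add, hy, hy']
    | tmul c d => simp [SH_mul, mul_assoc]

lemma antipodeMulLeft_assoc_mul (z : H ⊗[K] H) (d p q r : H) :
    antipodeMulLeft K H (TensorProduct.assoc K H H H (z ⊗ₜ d) * (p ⊗ₜ (q ⊗ₜ r))) =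
      antipodeMul K H (z * (p ⊗ₜ q)) ⊗ₜ (d * r) := by
  induction z using TensorProduct.induction_on with
  | zero => simp
  | add z z' hz hz' => simp only [add_tmul, map_add, add_mul, hz, hz']
  | tmul a b => simp

lemma antipodeMulLeft_comulLeft_mul (y : H ⊗[K] H) (w : H ⊗[K] (H ⊗[K] H)) :
    antipodeMulLeft K H (comulLeft K H y * w) =
      (1 ⊗ₜ counitLeft K H y) * antipodeMulLeft K H w := by
  induction y using TensorProduct.induction_on with
  | zero => simp
  | add y y' hy hy' => simp only [map_add, add_mul, tmul_add, hy, hy']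
  | tmul c d =>
    induction w using TensorProduct.induction_on with
    | zero => simp
    | add w w' hw hw' => simp only [map_add, mul_add, hw, hw']
    | tmul p z =>
      induction z using TensorProduct.induction_on with
      | zero => simp
      | add z z' hz hz' => simp only [tmul_add, map_add, mul_add, hz, hz']
      | tmul q r => simp [antipodeMulLeft_assoc_mul, antipodeMul_comul_mul, smul_tmul]

lemma antipodeMulLeft_ins3 (x : H ⊗[K] H) :
    antipodeMulLeft K H (ins3 K H x) = antipodeMul K H x ⊗ₜ 1 := by
  induction x using TensorProduct.induction_on with
  | zero => simp
  | add x x' hx hx' => simp only [map_add, add_tmul, hx, hx']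
  | tmul a b => simp

lemma antipodeMulLeft_mul_ins1 (z : H ⊗[K] (H ⊗[K] H)) (y : H ⊗[K] H) :
    antipodeMulLeft K H (z * ins1 K H y) = antipodeMulLeft K H z * y := by
  induction y using TensorProduct.induction_on with
  | zero => simp
  | add y y' hy hy' => simp only [map_add, mul_add, hy, hy']
  | tmul c d =>
    induction z using TensorProduct.induction_on with
    | zero => simp
    | add z z' hz hz' => simp only [map_add, add_mul, hz, hz']
    | tmul p z =>
      induction z using TensorProduct.induction_on with
      | zero => simp
      | add z z' hz hz' => simp only [tmul_add, map_add, add_mul, hz, hz']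
      | tmul q r => simp [mul_assoc]

lemma mulAntipode_antipodeMulLeft_tmul (a : H) (z : H ⊗[K] H) :
    mulAntipode K H (antipodeMulLeft K H (a ⊗ₜ z)) = SH K H a * mulAntipode K H z := by
  induction z using TensorProduct.induction_on with
  | zero => simp
  | add z z' hz hz' => simp only [tmul_add, map_add, mul_add, hz, hz']
  | tmul q r => simp [mul_assoc]

lemma mulAntipode_antipodeMulLeft_comulRight (x : H ⊗[K] H) :
    mulAntipode K H (antipodeMulLeft K H (comulRight K H x)) = SH K H (counitRight K H x) := by
  induction x using TensorProduct.induction_on with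
  | zero => simp
  | add x x' hx hx' => simp only [map_add, hx, hx']
  | tmul a b => simp [mulAntipode_antipodeMulLeft_tmul, mulAntipode_comul]

end Hopf

section Twist

variable {K H} {F Finv : H ⊗[K] H}

def IsTwist.unit (hF : IsTwist K H F Finv) : (H ⊗[K] H)ˣ := ⟨F, Finv, hF.mul_inv, hF.inv_mul⟩

lemma IsTwist.counitLeft_inv (hF : IsTwist K H F Finv) : counitLeft K H Finv = 1 :=
  map_units_inv_eq_one (counitLeftAlgHom K H).toMonoidHom hF.unit hF.counit_left

lemma IsTwist.counitRight_inv (hF : IsTwist K H F Finv) : counitRight K H Finv = 1 :=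
  map_units_inv_eq_one (counitRightAlgHom K H).toMonoidHom hF.unit hF.counit_right

lemma IsTwist.cocycle_inv (hF : IsTwist K H F Finv) :
    comulLeft K H Finv * ins3 K H Finv = comulRight K H Finv * ins1 K H Finv :=
  map_inv_mul_map_inv_of_mul_eq (ins3AlgHom K H).toMonoidHom (comulLeftAlgHom K H).toMonoidHom
    (ins1AlgHom K H).toMonoidHom (comulRightAlgHom K H).toMonoidHom hF.unit hF.cocycle

lemma IsTwist.comulRight_mul_comulLeft_inv (hF : IsTwist K H F Finv) :
    comulRight K H F * comulLeft K H Finv = ins1 K H Finv * ins3 K H F :=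
  (map_inv_mul_map_of_mul_eq (ins3AlgHom K H).toMonoidHom (comulLeftAlgHom K H).toMonoidHom
    (ins1AlgHom K H).toMonoidHom (comulRightAlgHom K H).toMonoidHom hF.unit hF.cocycle).symm

lemma IsTwist.dfConj_inv (hF : IsTwist K H F Finv) :
    dfConj K H Finv = antipodeRight K H F * (1 ⊗ₜ antipodeMul K H Finv) := by
  have h := congr_arg ((antipodeMul K H).lTensor H) hF.comulRight_mul_comulLeft_inv
  rwa [lTensor_antipodeMul_comulRight_mul, hF.counit_right, ← Algebra.TensorProduct.one_def,
    one_mul, lTensor_antipodeMul_ins1_mul_ins3] at h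

lemma IsTwist.mulAntipode_mul_antipodeMul (hF : IsTwist K H F Finv) :
    mulAntipode K H F * antipodeMul K H Finv = 1 := by
  have h := congr_arg (LinearMap.mul' K H) hF.dfConj_inv
  rwa [mul'_dfConj, hF.counitLeft_inv, mul'_mul_one_tmul, eq_comm] at h

lemma IsTwist.antipodeMul_mul_mulAntipode (hF : IsTwist K H F Finv) :
    antipodeMul K H Finv * mulAntipode K H F = 1 := by
  have h := congr_arg (antipodeMulLeft K H) hF.cocycle_inv
  rw [antipodeMulLeft_comulLeft_mul, hF.counitLeft_inv, antipodeMulLeft_ins3,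
    ← Algebra.TensorProduct.one_def, one_mul, antipodeMulLeft_mul_ins1] at h
  have h' : antipodeMulLeft K H (comulRight K H Finv) = (antipodeMul K H Finv ⊗ₜ 1) * F := by
    rw [h, mul_assoc, hF.inv_mul, mul_one]
  have := mulAntipode_antipodeMulLeft_comulRight (K := K) Finv
  rwa [h', mulAntipode_tmul_one_mul, hF.counitRight_inv, SH_one] at this

end Twist

section Modules

variable {K H} {V W Z : Type*} [AddCommGroup V] [Module K V] [AddCommGroup W] [Module K W]
  [AddCommGroup Z] [Module K Z]
  {ρZ : H →ₗ[K] Z →ₗ[K] Z} {ρW : H →ₗ[K] W →ₗ[K] W} {ρV : H →ₗ[K] V →ₗ[K] V}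

lemma IsHAction.map_mul (hV : IsHAction K H ρV) (a b : H) : ρV (a * b) = ρV a ∘ₗ ρV b :=
  LinearMap.ext (hV.1 a b)

lemma IsHAction.map_one (hV : IsHAction K H ρV) : ρV 1 = LinearMap.id :=
  LinearMap.ext hV.2

@[simp] lemma conjEnd_tmul (f : H →ₗ[K] W →ₗ[K] W) (g : H →ₗ[K] V →ₗ[K] V) (a b : H)
    (P : V →ₗ[K] W) : conjEnd K H f g (a ⊗ₜ b) P = f a ∘ₗ P ∘ₗ g b := rfl

lemma conjEnd_antipodeRight (f : H →ₗ[K] W →ₗ[K] W) (g : H →ₗ[K] V →ₗ[K] V) (x : H ⊗[K] H) :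
    conjEnd K H f g (antipodeRight K H x) = conjEnd K H f (g ∘ₗ SH K H) x :=
  LinearMap.congr_fun (TensorProduct.ext' fun _ _ => rfl :
    conjEnd K H f g ∘ₗ antipodeRight K H = conjEnd K H f (g ∘ₗ SH K H)) x

lemma conjEnd_mul_one_tmul (hV : IsHAction K H ρV) (x : H ⊗[K] H) (h : H) (P : V →ₗ[K] W) :
    conjEnd K H ρW ρV (x * (1 ⊗ₜ h)) P = conjEnd K H ρW ρV x P ∘ₗ ρV h := by
  induction x using TensorProduct.induction_on with
  | zero => simp
  | add x x' hx hx' =>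
    simp only [add_mul, map_add, LinearMap.add_apply, hx, hx', LinearMap.add_comp]
  | tmul a b => simp [hV.map_mul, LinearMap.comp_assoc]

lemma conjEnd_antipode_mul (hV : IsHAction K H ρV) (hW : IsHAction K H ρW) (x y : H ⊗[K] H)
    (P : V →ₗ[K] W) :
    conjEnd K H ρW (ρV ∘ₗ SH K H) (x * y) P =
      conjEnd K H ρW (ρV ∘ₗ SH K H) x (conjEnd K H ρW (ρV ∘ₗ SH K H) y P) := by
  induction x using TensorProduct.induction_on with
  | zero => simp
  | add x x' hx hx' => simp only [add_mul, map_add, LinearMap.add_apply, hx, hx']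
  | tmul a b =>
    induction y using TensorProduct.induction_on with
    | zero => simp
    | add y y' hy hy' => simp only [mul_add, map_add, LinearMap.add_apply, hy, hy']
    | tmul c d => simp [hV.map_mul, hW.map_mul, SH_mul, LinearMap.comp_assoc]

lemma conjEnd_antipode_one (hV : IsHAction K H ρV) (hW : IsHAction K H ρW) (P : V →ₗ[K] W) :
    conjEnd K H ρW (ρV ∘ₗ SH K H) 1 P = P := by
  simp [Algebra.TensorProduct.one_def, SH_one, hV.map_one, hW.map_one]

lemma conjEnd_id (hV : IsHAction K H ρV) (x : H ⊗[K] H) :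
    conjEnd K H ρV ρV x LinearMap.id = ρV (LinearMap.mul' K H x) := by
  induction x using TensorProduct.induction_on with
  | zero => simp
  | add x x' hx hx' => simp only [map_add, LinearMap.add_apply, hx, hx']
  | tmul a b => simp [hV.map_mul]

lemma adjHom_mul (hV : IsHAction K H ρV) (hW : IsHAction K H ρW) (a b : H) (P : V →ₗ[K] W) :
    adjHom K H ρW ρV (a * b) P = adjHom K H ρW ρV a (adjHom K H ρW ρV b P) := by
  simp only [adjHom, LinearMap.comp_apply, ΔH, Bialgebra.comul_mul, conjEnd_antipode_mul hV hW]

lemma DFhom_tmul (a b : H) (P : V →ₗ[K] W) :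
    DFhom K H (a ⊗ₜ b) ρW ρV P = adjHom K H ρW ρV a P ∘ₗ ρV b := rfl

lemma DFhom_zero : DFhom K H 0 ρW ρV = 0 := by
  simp [DFhom]

lemma DFhom_add (x y : H ⊗[K] H) :
    DFhom K H (x + y) ρW ρV = DFhom K H x ρW ρV + DFhom K H y ρW ρV := by
  simp [DFhom]

lemma DFhom_eq_conjEnd_dfConj (hV : IsHAction K H ρV) (x : H ⊗[K] H) :
    DFhom K H x ρW ρV = conjEnd K H ρW ρV (dfConj K H x) := by
  induction x using TensorProduct.induction_on with
  | zero => simp [DFhom_zero]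
  | add x x' hx hx' => simp only [DFhom_add, map_add, hx, hx']
  | tmul a b =>
    ext1 P
    rw [DFhom_tmul, dfConj_tmul, conjEnd_mul_one_tmul hV, conjEnd_antipodeRight]
    rfl

lemma DFhom_comul (hV : IsHAction K H ρV) (b : H) (P : V →ₗ[K] W) :
    DFhom K H (ΔH K H b) ρW ρV P = ρW b ∘ₗ P := by
  rw [DFhom_eq_conjEnd_dfConj hV, dfConj_comul, conjEnd_tmul, hV.map_one, LinearMap.comp_id]

lemma DFhom_comul_mul (hV : IsHAction K H ρV) (hW : IsHAction K H ρW) (b : H) (y : H ⊗[K] H)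
    (P : V →ₗ[K] W) : DFhom K H (ΔH K H b * y) ρW ρV P = ρW b ∘ₗ DFhom K H y ρW ρV P := by
  induction y using TensorProduct.induction_on with
  | zero => simp [DFhom_zero]
  | add y y' hy hy' =>
    simp only [mul_add, DFhom_add, LinearMap.add_apply, hy, hy', LinearMap.comp_add]
  | tmul c d =>
    have key : ∀ w, DFhom K H (w * (c ⊗ₜ d)) ρW ρV P =
        DFhom K H w ρW ρV (adjHom K H ρW ρV c P) ∘ₗ ρV d := by
      intro w
      induction w using TensorProduct.induction_on with
      | zero => simp [DFhom_zero]
      | add w w' hw hw' =>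
        simp only [add_mul, DFhom_add, LinearMap.add_apply, hw, hw', LinearMap.add_comp]
      | tmul p q =>
        rw [Algebra.TensorProduct.tmul_mul_tmul, DFhom_tmul, DFhom_tmul, adjHom_mul hV hW,
          hV.map_mul, LinearMap.comp_assoc]
    rw [key, DFhom_comul hV, DFhom_tmul, LinearMap.comp_assoc]

lemma DFhom_id (hV : IsHAction K H ρV) (x : H ⊗[K] H) :
    DFhom K H x ρV ρV LinearMap.id = ρV (counitLeft K H x) := by
  rw [DFhom_eq_conjEnd_dfConj hV, conjEnd_id hV, mul'_dfConj]

lemma sw_tmul (f : H →ₗ[K] (W →ₗ[K] Z) →ₗ[K] (W →ₗ[K] Z))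
    (g : H →ₗ[K] (V →ₗ[K] W) →ₗ[K] (V →ₗ[K] W)) (a b : H) (P : W →ₗ[K] Z) (Q : V →ₗ[K] W) :
    sw K H (a ⊗ₜ b) f g (LinearMap.llcomp K V W Z) P Q = f a P ∘ₗ g b Q := rfl

lemma sw_zero (f : H →ₗ[K] (W →ₗ[K] Z) →ₗ[K] (W →ₗ[K] Z))
    (g : H →ₗ[K] (V →ₗ[K] W) →ₗ[K] (V →ₗ[K] W)) (P : W →ₗ[K] Z) (Q : V →ₗ[K] W) :
    sw K H 0 f g (LinearMap.llcomp K V W Z) P Q = 0 := by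
  simp [sw]

lemma sw_add (f : H →ₗ[K] (W →ₗ[K] Z) →ₗ[K] (W →ₗ[K] Z))
    (g : H →ₗ[K] (V →ₗ[K] W) →ₗ[K] (V →ₗ[K] W)) (x y : H ⊗[K] H) (P : W →ₗ[K] Z)
    (Q : V →ₗ[K] W) :
    sw K H (x + y) f g (LinearMap.llcomp K V W Z) P Q =
      sw K H x f g (LinearMap.llcomp K V W Z) P Q +
        sw K H y f g (LinearMap.llcomp K V W Z) P Q := by
  simp [sw]

lemma adjHom_comp (hW : IsHAction K H ρW) (a : H) (P : W →ₗ[K] Z) (Q : V →ₗ[K] W) :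
    adjHom K H ρZ ρV a (P ∘ₗ Q) =
      sw K H (ΔH K H a) (adjHom K H ρZ ρW) (adjHom K H ρW ρV) (LinearMap.llcomp K V W Z) P Q := by
  -- `Φ (a ⊗ b ⊗ c) = (a ▶ P) ∘ (b ▷) ∘ Q ∘ (S c ▷)`; coassociativity regroups `a₁ ⊗ a₂₁ ⊗ a₂₂`
  -- as `a₁₁ ⊗ a₁₂ ⊗ a₂`, and `DFhom_comul` collapses `(a₁₁ ▶ P) ∘ (a₁₂ ▷)` to `(a₁ ▷) ∘ P`.
  let Φ : H ⊗[K] (H ⊗[K] H) →ₗ[K] V →ₗ[K] Z := TensorProduct.lift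
    ((LinearMap.llcomp K V W Z).compl₁₂ ((adjHom K H ρZ ρW).flip P)
      ((conjEnd K H ρW (ρV ∘ₗ SH K H)).flip Q))
  have hsw : ∀ x, sw K H x (adjHom K H ρZ ρW) (adjHom K H ρW ρV) (LinearMap.llcomp K V W Z) P Q =
      Φ ((ΔH K H).lTensor H x) := by
    intro x
    induction x using TensorProduct.induction_on with
    | zero => simp [sw_zero]
    | add x x' hx hx' => simp only [sw_add, map_add, hx, hx']
    | tmul p q => rfl
  have hassoc : ∀ w c, Φ (TensorProduct.assoc K H H H (w ⊗ₜ c)) =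
      DFhom K H w ρZ ρW P ∘ₗ Q ∘ₗ ρV (SH K H c) := by
    intro w c
    induction w using TensorProduct.induction_on with
    | zero => simp [DFhom_zero]
    | add w w' hw hw' =>
      simp only [add_tmul, map_add, hw, hw', DFhom_add, LinearMap.add_apply, LinearMap.add_comp]
    | tmul p q => rfl
  have hcollapse : ∀ w, Φ (TensorProduct.assoc K H H H ((ΔH K H).rTensor H w)) =
      conjEnd K H ρZ (ρV ∘ₗ SH K H) w (P ∘ₗ Q) := by
    intro w
    induction w using TensorProduct.induction_on with
    | zero => simp
    | add w w' hw hw' => simp only [map_add, hw, hw', LinearMap.add_apply]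
    | tmul p c =>
      rw [LinearMap.rTensor_tmul, hassoc, DFhom_comul hW]
      rfl
  rw [hsw]
  exact (hcollapse (ΔH K H a)).symm.trans (congr_arg Φ (Coalgebra.coassoc_apply (R := K) a))

variable (ρZ ρW ρV) in
def adjCompDF (P : W →ₗ[K] Z) (Q : V →ₗ[K] W) : H ⊗[K] (H ⊗[K] H) →ₗ[K] V →ₗ[K] Z :=
  TensorProduct.lift ((LinearMap.llcomp K V W Z).compl₁₂ ((adjHom K H ρZ ρW).flip P)
    ((twistEnd K H ((LinearMap.llcomp K V V W).flip ∘ₗ ρV) (adjHom K H ρW ρV) ∘ₗ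
      (TensorProduct.comm K H H).toLinearMap).flip Q))

lemma adjCompDF_tmul (P : W →ₗ[K] Z) (Q : V →ₗ[K] W) (a : H) (y : H ⊗[K] H) :
    adjCompDF ρZ ρW ρV P Q (a ⊗ₜ y) = adjHom K H ρZ ρW a P ∘ₗ DFhom K H y ρW ρV Q := rfl

lemma DFhom_sw (hV : IsHAction K H ρV) (hW : IsHAction K H ρW) (hZ : IsHAction K H ρZ)
    (x y : H ⊗[K] H) (P : W →ₗ[K] Z) (Q : V →ₗ[K] W) :
    DFhom K H x ρZ ρV
        (sw K H y (adjHom K H ρZ ρW) (adjHom K H ρW ρV) (LinearMap.llcomp K V W Z) P Q) =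
      adjCompDF ρZ ρW ρV P Q (comulLeft K H x * ins3 K H y) := by
  induction x using TensorProduct.induction_on with
  | zero => simp [DFhom_zero]
  | add x x' hx hx' => simp only [DFhom_add, map_add, add_mul, LinearMap.add_apply, hx, hx']
  | tmul a b =>
    induction y using TensorProduct.induction_on with
    | zero => simp [sw_zero]
    | add y y' hy hy' => simp only [sw_add, map_add, mul_add, hy, hy']
    | tmul c d =>
      have key : ∀ w, sw K H w (adjHom K H ρZ ρW) (adjHom K H ρW ρV) (LinearMap.llcomp K V W Z)
            (adjHom K H ρZ ρW c P) (adjHom K H ρW ρV d Q) ∘ₗ ρV b =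
          adjCompDF ρZ ρW ρV P Q (TensorProduct.assoc K H H H (w ⊗ₜ b) * (c ⊗ₜ (d ⊗ₜ 1))) := by
        intro w
        induction w using TensorProduct.induction_on with
        | zero => simp [sw_zero]
        | add w w' hw hw' =>
          simp only [sw_add, LinearMap.add_comp, add_tmul, map_add, add_mul, hw, hw']
        | tmul p q =>
          simp only [TensorProduct.assoc_tmul, Algebra.TensorProduct.tmul_mul_tmul, mul_one,
            adjCompDF_tmul, DFhom_tmul, sw_tmul, adjHom_mul hV hW, adjHom_mul hW hZ,
            LinearMap.comp_assoc]
      rw [DFhom_tmul, sw_tmul, adjHom_comp hW, comulLeft_tmul, ins3_tmul, key]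

lemma adjCompDF_comulRight_mul_ins1 (hV : IsHAction K H ρV) (hW : IsHAction K H ρW)
    (x y : H ⊗[K] H) (P : W →ₗ[K] Z) (Q : V →ₗ[K] W) :
    adjCompDF ρZ ρW ρV P Q (comulRight K H x * ins1 K H y) =
      DFhom K H x ρZ ρW P ∘ₗ DFhom K H y ρW ρV Q := by
  induction x using TensorProduct.induction_on with
  | zero => simp [DFhom_zero]
  | add x x' hx hx' =>
    simp only [DFhom_add, map_add, add_mul, LinearMap.add_apply, hx, hx', LinearMap.add_comp]
  | tmul a b =>
    rw [comulRight_tmul, ins1_apply, Algebra.TensorProduct.tmul_mul_tmul, mul_one,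
      adjCompDF_tmul, DFhom_comul_mul hV hW, DFhom_tmul, LinearMap.comp_assoc]

lemma bijective_conjEnd_antipode (hV : IsHAction K H ρV) (hW : IsHAction K H ρW)
    {x y : H ⊗[K] H} (hxy : x * y = 1) (hyx : y * x = 1) :
    Function.Bijective (conjEnd K H ρW (ρV ∘ₗ SH K H) x) := by
  refine Function.bijective_iff_has_inverse.mpr
    ⟨conjEnd K H ρW (ρV ∘ₗ SH K H) y, fun P => ?_, fun P => ?_⟩
  · rw [← conjEnd_antipode_mul hV hW, hyx, conjEnd_antipode_one hV hW]
  · rw [← conjEnd_antipode_mul hV hW, hxy, conjEnd_antipode_one hV hW]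

lemma bijective_comp_action_of_mul_eq_one (hV : IsHAction K H ρV) {a b : H} (hab : a * b = 1)
    (hba : b * a = 1) : Function.Bijective fun P : V →ₗ[K] W => P ∘ₗ ρV a := by
  refine Function.bijective_iff_has_inverse.mpr ⟨fun P => P ∘ₗ ρV b, fun P => ?_, fun P => ?_⟩
  · simp only [LinearMap.comp_assoc, ← hV.map_mul, hab, hV.map_one, LinearMap.comp_id]
  · simp only [LinearMap.comp_assoc, ← hV.map_mul, hba, hV.map_one, LinearMap.comp_id]

lemma IsTwist.DFhom_eq_comp {F Finv : H ⊗[K] H} (hF : IsTwist K H F Finv)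
    (hV : IsHAction K H ρV) :
    ⇑(DFhom K H Finv ρW ρV) =
      (fun P => P ∘ₗ ρV (antipodeMul K H Finv)) ∘ conjEnd K H ρW (ρV ∘ₗ SH K H) F := by
  ext1 P
  rw [DFhom_eq_conjEnd_dfConj hV, hF.dfConj_inv, conjEnd_mul_one_tmul hV, conjEnd_antipodeRight]
  rfl

end Modules

variable {V W Z : Type*} [AddCommGroup V] [Module K V] [AddCommGroup W] [Module K W]
  [AddCommGroup Z] [Module K Z]

/-- for left `H`-modules `V`, `W`, `Z`, the deformation map
`D_F(P) = (f̄^α ▶ P) ∘ (f̄_α ▷)` on `K`-linear maps is bijective, satisfies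
`D_F(P ∘_⋆ Q) = D_F(P) ∘ D_F(Q)` where `P ∘_⋆ Q = (f̄^α ▶ P) ∘ (f̄_α ▶ Q)`,
and `D_F(id) = id`. -/
theorem DFhom_bijective_and_multiplicative (F Finv : H ⊗[K] H) (hF : IsTwist K H F Finv)
    (ρV : H →ₗ[K] V →ₗ[K] V) (hV : IsHAction K H ρV)
    (ρW : H →ₗ[K] W →ₗ[K] W) (hW : IsHAction K H ρW)
    (ρZ : H →ₗ[K] Z →ₗ[K] Z) (hZ : IsHAction K H ρZ) :
    Function.Bijective (DFhom K H Finv ρW ρV)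
    ∧ (∀ (P : W →ₗ[K] Z) (Q : V →ₗ[K] W),
        DFhom K H Finv ρZ ρV
            (sw K H Finv (adjHom K H ρZ ρW) (adjHom K H ρW ρV)
              (LinearMap.llcomp K V W Z) P Q)
          = DFhom K H Finv ρZ ρW P ∘ₗ DFhom K H Finv ρW ρV Q)
    ∧ DFhom K H Finv ρV ρV LinearMap.id = LinearMap.id := by
  refine ⟨?_, fun P Q => ?_, ?_⟩
  · rw [hF.DFhom_eq_comp hV]
    exact (bijective_comp_action_of_mul_eq_one hV hF.antipodeMul_mul_mulAntipode
      hF.mulAntipode_mul_antipodeMul).comp (bijective_conjEnd_antipode hV hW hF.mul_inv hF.inv_mul)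
  · rw [DFhom_sw hV hW hZ, hF.cocycle_inv, adjCompDF_comulRight_mul_ins1 hV hW]
  · rw [DFhom_id hV, hF.counitLeft_inv, hV.map_one]

end TwistPaper
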